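/- Let G* = Σ_{j=1}^L exp(b*ⱼ) δ_{Z*ⱼ} be a discrete measure with distinct atoms Z*ⱼ in a metric space and positive weights, and let G = Σ_{i=1}^{L'} exp(bᵢ) δ_{Zᵢ} with L' ≥ L. Define D(G,G*) = Σⱼ |Σ_{i∈𝒱ⱼ} exp(bᵢ) - exp(b*ⱼ)| + Σⱼ Σ_{i∈𝒱ⱼ} exp(bᵢ)·dist(Zᵢ, Z*ⱼ), where 𝒱ⱼ are the Voronoi cells of the atoms of G generated by the Z*ⱼ. Then D(G, G*) = 0 if and only if the measures G and G* are equal (i.e., the multisets of weighted atoms coincide). -/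

import Mathlib

/-!
Both `D(G, G*) = 0` and `G = G*` are equivalent to: every atom `Zᵢ` coincides with the centre
`Z*_{φ i}` of its Voronoi cell, and each cell carries mass `exp(b*ⱼ)`. For the loss this holds
because it is a sum of nonnegative terms and the weights `exp(bᵢ)` are positive. For the
measures, evaluating on singletons shows that every atom of `G` is an atom of `G*`, hence its own
nearest centre; `G` then regroups cellwise as `Σⱼ (mass of 𝒱ⱼ) δ_{Z*ⱼ}`, and since the `Z*ⱼ` are
distinct the coefficients can be compared.
-/

open MeasureTheory

section

open Finset

variable {ι κ M : Type*} [Fintype ι] [Fintype κ]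

-- The Voronoi cells `𝒱ⱼ` are the fibres of an assignment `φ` of atoms to centres.
def voronoiLoss [DecidableEq κ] [PseudoMetricSpace M] (φ : ι → κ) (a : ι → ℝ)
    (Z : ι → M) (w : κ → ℝ) (Zs : κ → M) : ℝ :=
  (∑ j, |(∑ i ∈ univ.filter (fun i => φ i = j), a i) - w j|)
    + ∑ j, ∑ i ∈ univ.filter (fun i => φ i = j), a i * dist (Z i) (Zs j)

lemma Fintype.sum_fiberwise_eq_sum_comp [DecidableEq κ] {N : Type*} [AddCommMonoid N]
    (φ : ι → κ) (f : ι → κ → N) :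
    ∑ j, ∑ i ∈ univ.filter (fun i => φ i = j), f i j = ∑ i, f i (φ i) := by
  rw [← Finset.sum_fiberwise univ φ (fun i => f i (φ i))]
  refine Finset.sum_congr rfl fun j _ => Finset.sum_congr rfl fun i hi => ?_
  rw [(mem_filter.1 hi).2]

lemma voronoiLoss_eq_zero_iff [DecidableEq κ] [MetricSpace M] {φ : ι → κ} {a : ι → ℝ}
    (ha : ∀ i, 0 < a i) (Z : ι → M) (w : κ → ℝ) (Zs : κ → M) :
    voronoiLoss φ a Z w Zs = 0 ↔
      (∀ j, ∑ i ∈ univ.filter (fun i => φ i = j), a i = w j) ∧ ∀ i, Z i = Zs (φ i) := by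
  have hdist : ∀ i ∈ univ, 0 ≤ a i * dist (Z i) (Zs (φ i)) :=
    fun i _ => mul_nonneg (ha i).le dist_nonneg
  rw [voronoiLoss, Fintype.sum_fiberwise_eq_sum_comp φ (fun i j => a i * dist (Z i) (Zs j)),
    add_eq_zero_iff_of_nonneg (sum_nonneg fun j _ => abs_nonneg _) (sum_nonneg hdist),
    sum_eq_zero_iff_of_nonneg (fun j _ => abs_nonneg _), sum_eq_zero_iff_of_nonneg hdist]
  simp [sub_eq_zero, (ha _).ne', dist_eq_zero]

namespace MeasureTheory.Measure

variable [MeasurableSpace M]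

lemma finsetSum_smul_dirac_eq_sum_fiberwise [DecidableEq κ] (φ : ι → κ) (c : ι → ENNReal)
    {Z : ι → M} {Zs : κ → M} (hZ : ∀ i, Z i = Zs (φ i)) :
    ∑ i, c i • dirac (Z i) = ∑ j, (∑ i ∈ univ.filter (fun i => φ i = j), c i) • dirac (Zs j) := by
  simp_rw [hZ, sum_smul]
  exact (Fintype.sum_fiberwise_eq_sum_comp φ (fun i j => c i • dirac (Zs j))).symm

variable [MeasurableSingletonClass M]

lemma finsetSum_smul_dirac_apply_singleton [DecidableEq M] (c : ι → ENNReal) (Z : ι → M)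
    (x : M) : (∑ i, c i • dirac (Z i)) {x} = ∑ i ∈ univ.filter (fun i => Z i = x), c i := by
  simp [finsetSum_apply, Set.indicator_apply, sum_filter]

lemma finsetSum_smul_dirac_apply_singleton_of_injective (c : κ → ENNReal) {Zs : κ → M}
    (hZs : Function.Injective Zs) (k : κ) : (∑ j, c j • dirac (Zs j)) {Zs k} = c k := by
  classical
  rw [finsetSum_smul_dirac_apply_singleton]
  simp [hZs.eq_iff, sum_filter]

lemma mem_range_of_finsetSum_smul_dirac_eq {c : ι → ENNReal} (hc : ∀ i, c i ≠ 0) {Z : ι → M}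
    {d : κ → ENNReal} {Zs : κ → M}
    (h : ∑ i, c i • dirac (Z i) = ∑ j, d j • dirac (Zs j)) (i : ι) : Z i ∈ Set.range Zs := by
  classical
  by_contra hi
  have hmass := congrArg (fun μ : Measure M => μ {Z i}) h
  simp only [finsetSum_smul_dirac_apply_singleton] at hmass
  rw [filter_false_of_mem fun j _ hj => hi ⟨j, hj⟩, sum_empty, sum_eq_zero_iff] at hmass
  exact hc i (hmass i (by simp))

lemma finsetSum_smul_dirac_eq_iff [DecidableEq κ] [MetricSpace M] {φ : ι → κ}
    {c : ι → ENNReal} (hc : ∀ i, c i ≠ 0) {Z : ι → M} (d : κ → ENNReal) {Zs : κ → M}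
    (hZs : Function.Injective Zs) (hφ : ∀ i ℓ, dist (Z i) (Zs (φ i)) ≤ dist (Z i) (Zs ℓ)) :
    ∑ i, c i • dirac (Z i) = ∑ j, d j • dirac (Zs j) ↔
      (∀ j, ∑ i ∈ univ.filter (fun i => φ i = j), c i = d j) ∧ ∀ i, Z i = Zs (φ i) := by
  constructor
  · intro h
    have hZ : ∀ i, Z i = Zs (φ i) := fun i => by
      obtain ⟨ℓ, hℓ⟩ := mem_range_of_finsetSum_smul_dirac_eq hc h i
      exact dist_le_zero.1 (by simpa [← hℓ] using hφ i ℓ)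
    rw [finsetSum_smul_dirac_eq_sum_fiberwise φ c hZ] at h
    refine ⟨fun j => ?_, hZ⟩
    simpa [finsetSum_smul_dirac_apply_singleton_of_injective _ hZs] using congrArg (· {Zs j}) h
  · rintro ⟨hmass, hZ⟩
    simp_rw [finsetSum_smul_dirac_eq_sum_fiberwise φ c hZ, hmass]

end MeasureTheory.Measure

end

theorem voronoi_loss_eq_zero_iff_general {M : Type*} [MetricSpace M] [MeasurableSpace M]
    [BorelSpace M] (L L' : ℕ)
    (Zs : Fin L → M) (hZs : Function.Injective Zs) (bs : Fin L → ℝ)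
    (Z : Fin L' → M) (b : Fin L' → ℝ)
    (φ : Fin L' → Fin L)
    (hφ : ∀ i ℓ, dist (Z i) (Zs (φ i)) ≤ dist (Z i) (Zs ℓ))
    (D : ℝ)
    (hD : D = (∑ j, |(∑ i ∈ Finset.univ.filter (fun i => φ i = j), Real.exp (b i))
                  - Real.exp (bs j)|)
            + ∑ j, ∑ i ∈ Finset.univ.filter (fun i => φ i = j),
                Real.exp (b i) * dist (Z i) (Zs j)) :
    D = 0 ↔
      (∑ i, (ENNReal.ofReal (Real.exp (b i))) • Measure.dirac (Z i))
        = ∑ j, (ENNReal.ofReal (Real.exp (bs j))) • Measure.dirac (Zs j) := by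
  have hloss : D = voronoiLoss φ (fun i => Real.exp (b i)) Z (fun j => Real.exp (bs j)) Zs := hD
  rw [hloss, voronoiLoss_eq_zero_iff (fun i => Real.exp_pos _),
    Measure.finsetSum_smul_dirac_eq_iff (fun i => by simp [Real.exp_pos]) _ hZs hφ]
  refine and_congr_left' (forall_congr' fun j => ?_)
  rw [← ENNReal.ofReal_sum_of_nonneg fun i _ => (Real.exp_pos _).le,
    ENNReal.ofReal_eq_ofReal_iff (Finset.sum_nonneg fun i _ => (Real.exp_pos _).le) (Real.exp_pos _).le]

/-- The Voronoi loss separates mixing measures: `D(G, G*) = 0` iff the discrete measures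
`G = Σᵢ exp(bᵢ) δ_{Zᵢ}` and `G* = Σⱼ exp(b*ⱼ) δ_{Z*ⱼ}` coincide. The assignment `φ`
sends each atom index `i` to the (unique chosen) Voronoi cell containing it, so that the
cells `{i : φ i = j}` partition the index set. -/
theorem voronoi_loss_eq_zero_iff {M : Type*} [MetricSpace M] [MeasurableSpace M]
    [BorelSpace M] (L L' : ℕ) (hLL' : L ≤ L')
    (Zs : Fin L → M) (hZs : Function.Injective Zs) (bs : Fin L → ℝ)
    (Z : Fin L' → M) (b : Fin L' → ℝ)
    (φ : Fin L' → Fin L)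
    (hφ : ∀ i ℓ, dist (Z i) (Zs (φ i)) ≤ dist (Z i) (Zs ℓ))
    (D : ℝ)
    (hD : D = (∑ j, |(∑ i ∈ Finset.univ.filter (fun i => φ i = j), Real.exp (b i))
                  - Real.exp (bs j)|)
            + ∑ j, ∑ i ∈ Finset.univ.filter (fun i => φ i = j),
                Real.exp (b i) * dist (Z i) (Zs j)) :
    D = 0 ↔
      (∑ i, (ENNReal.ofReal (Real.exp (b i))) • Measure.dirac (Z i))
        = ∑ j, (ENNReal.ofReal (Real.exp (bs j))) • Measure.dirac (Zs j) :=
  voronoi_loss_eq_zero_iff_general L L' Zs hZs bs Z b φ hφ D hD
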